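/- If G is a finite König–Egerváry graph, then the induced subgraph G − N[core(G)] has a perfect matching and is itself a König–Egerváry graph. -/

import Mathlib

namespace KEPaper

open SimpleGraph

variable {V : Type*}

/-- `nbhd G S` is the set of vertices having a neighbor in `S`. -/
def nbhd (G : SimpleGraph V) (S : Set V) : Set V := {v | ∃ w ∈ S, G.Adj v w}

/-- `S` is an independent set of `G`: no two vertices of `S` are adjacent. -/
def IsIndep (G : SimpleGraph V) (S : Set V) : Prop :=
  S.Pairwise fun u v => ¬ G.Adj u v

/-- The independence number `α(G)`: maximum cardinality of an independent set. -/
noncomputable def indepNum (G : SimpleGraph V) : ℕ :=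
  sSup {n | ∃ S : Set V, IsIndep G S ∧ S.ncard = n}

/-- The matching number `μ(G)`: maximum cardinality of a matching. -/
noncomputable def matchNum (G : SimpleGraph V) : ℕ :=
  sSup {n | ∃ M : Subgraph G, M.IsMatching ∧ M.edgeSet.ncard = n}

/-- `S` is a maximum independent set of `G`. -/
def IsMaxIndep (G : SimpleGraph V) (S : Set V) : Prop :=
  IsIndep G S ∧ S.ncard = indepNum G

/-- The critical difference `d(G) = max {|S| - |N(S)| : S independent}`. -/
noncomputable def critDiff (G : SimpleGraph V) : ℤ :=
  sSup {d : ℤ | ∃ S : Set V, IsIndep G S ∧ d = (S.ncard : ℤ) - ((nbhd G S).ncard : ℤ)}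

/-- `S` is a critical independent set: independent with `|S| - |N(S)| = d(G)`. -/
def IsCritIndep (G : SimpleGraph V) (S : Set V) : Prop :=
  IsIndep G S ∧ (S.ncard : ℤ) - ((nbhd G S).ncard : ℤ) = critDiff G

/-- `core G` is the intersection of all maximum independent sets of `G`. -/
def core (G : SimpleGraph V) : Set V := ⋂ S ∈ {S : Set V | IsMaxIndep G S}, S

/-- `G` is a König–Egerváry graph: `|V(G)| = α(G) + μ(G)`. -/
def KoenigEgervary (G : SimpleGraph V) : Prop :=
  Nat.card V = indepNum G + matchNum G

/-- `A` is a local maximum independent set of `G`: it is a maximum independent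
set of the subgraph of `G` induced by `N[A] = A ∪ N(A)`. -/
def IsLocalMaxIndep (G : SimpleGraph V) (A : Set V) : Prop :=
  IsMaxIndep (G.induce (A ∪ nbhd G A)) {x : ↥(A ∪ nbhd G A) | ↑x ∈ A}

end KEPaper

/-!
Fix a maximum matching `M` of the König–Egerváry graph `G`. For every maximum independent set
`T` we have `|V| - |T| = μ(G) = |M|`, and since each edge of `M` has an endpoint outside `T`,
`M` must match every vertex outside `T` to a vertex of `T`. Consequently, if `y` has a neighbour
in `core G` then `y` lies in no maximum independent set, so its `M`-partner lies in all of them,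
i.e. in `core G`. Hence `M` matches every vertex outside `N[core G]` to a vertex outside
`N[core G]`: the restriction of `M` is a perfect matching of `G - N[core G]`. It matches the
vertices outside a fixed maximum independent set `S` into `S`, which makes `G - N[core G]`
König–Egerváry.
-/

namespace SimpleGraph.Subgraph.IsMatching

open KEPaper

variable {V : Type*} {G : SimpleGraph V} {M : Subgraph G} (hM : M.IsMatching)
include hM

lemma surjective_toEdge_verts_diff {T : Set V} (hT : IsIndep G T) :
    Function.Surjective fun v : ↥(M.verts \ T) => hM.toEdge ⟨v, v.2.1⟩ := by
  rintro ⟨e, he⟩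
  induction e using Sym2.ind with
  | _ a b =>
    rw [Subgraph.mem_edgeSet] at he
    by_cases ha : a ∈ T
    · have hb : b ∉ T := fun hb => hT ha hb (M.adj_sub he).ne (M.adj_sub he)
      exact ⟨⟨b, M.edge_vert he.symm, hb⟩,
        (hM.toEdge_eq_of_adj he.symm).trans (Subtype.ext Sym2.eq_swap)⟩
    · exact ⟨⟨a, M.edge_vert he, ha⟩, hM.toEdge_eq_of_adj he⟩

lemma isPerfectMatching_comap_induce {W : Set V} (hW : ∀ v ∈ W, ∃ w ∈ W, M.Adj v w) :
    (M.comap (Embedding.induce W).toHom).IsPerfectMatching := by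
  rw [isPerfectMatching_iff]
  rintro ⟨v, hv⟩
  obtain ⟨w, hw, hvw⟩ := hW v hv
  exact ⟨⟨w, hw⟩, ⟨M.adj_sub hvw, hvw⟩,
    fun u hu => Subtype.ext (hM.eq_of_adj_left hu.2 hvw)⟩

variable [Finite V]

lemma ncard_edgeSet_le_ncard_verts_diff {T : Set V} (hT : IsIndep G T) :
    M.edgeSet.ncard ≤ (M.verts \ T).ncard := by
  rw [← Nat.card_coe_set_eq, ← Nat.card_coe_set_eq]
  exact Nat.card_le_card_of_surjective _ (hM.surjective_toEdge_verts_diff hT)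

lemma ncard_edgeSet_lt_ncard_verts_diff {T : Set V} (hT : IsIndep G T) {v w : V}
    (hvw : M.Adj v w) (hv : v ∉ T) (hw : w ∉ T) :
    M.edgeSet.ncard < (M.verts \ T).ncard := by
  rw [← Nat.card_coe_set_eq, ← Nat.card_coe_set_eq]
  by_contra! hle
  have hinj := ((hM.surjective_toEdge_verts_diff hT).bijective_of_nat_card_le hle).1
  have hvw_eq : (⟨v, hvw.fst_mem, hv⟩ : ↥(M.verts \ T)) = ⟨w, hvw.snd_mem, hw⟩ :=
    hinj (hM.toEdge_eq_toEdge_of_adj hvw)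
  exact (M.adj_sub hvw).ne (congrArg Subtype.val hvw_eq)

lemma ncard_le_ncard_edgeSet {B : Set V} (hB : B ⊆ M.verts)
    (hnadj : ∀ u ∈ B, ∀ v ∈ B, ¬ M.Adj u v) : B.ncard ≤ M.edgeSet.ncard := by
  rw [← Nat.card_coe_set_eq, ← Nat.card_coe_set_eq]
  refine Nat.card_le_card_of_injective (fun v : B => hM.toEdge ⟨v, hB v.2⟩) fun u v huv => ?_
  by_contra hne
  dsimp only at huv
  obtain ⟨w, huw, -⟩ := hM (hB u.2)
  have hv : (v : V) ∈ s((u : V), w) := by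
    have := hM.mem_coe_toEdge (hB v.2)
    rwa [← huv, hM.toEdge_eq_of_adj huw] at this
  rcases Sym2.mem_iff.1 hv with h | h
  · exact hne (Subtype.ext h.symm)
  · exact hnadj u u.2 v v.2 (h ▸ huw)

end SimpleGraph.Subgraph.IsMatching

namespace KEPaper

open SimpleGraph

variable {V : Type*} {G : SimpleGraph V}

def IsMaxMatching (G : SimpleGraph V) (M : Subgraph G) : Prop :=
  M.IsMatching ∧ M.edgeSet.ncard = matchNum G

lemma mem_core_iff {x : V} : x ∈ core G ↔ ∀ S, IsMaxIndep G S → x ∈ S := by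
  simp [core]

section Finite

variable [Finite V]

lemma bddAbove_ncard_isIndep (G : SimpleGraph V) :
    BddAbove {n | ∃ S : Set V, IsIndep G S ∧ S.ncard = n} := by
  refine ⟨Nat.card V, fun n hn => ?_⟩
  obtain ⟨S, -, rfl⟩ := hn
  exact Set.ncard_le_card S

lemma bddAbove_ncard_isMatching (G : SimpleGraph V) :
    BddAbove {n | ∃ M : Subgraph G, M.IsMatching ∧ M.edgeSet.ncard = n} := by
  refine ⟨Nat.card (Sym2 V), fun n hn => ?_⟩
  obtain ⟨M, -, rfl⟩ := hn
  exact Set.ncard_le_card _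

lemma IsIndep.ncard_le_indepNum {S : Set V} (hS : IsIndep G S) : S.ncard ≤ indepNum G :=
  le_csSup (bddAbove_ncard_isIndep G) ⟨S, hS, rfl⟩

lemma exists_isMaxIndep (G : SimpleGraph V) : ∃ S, IsMaxIndep G S := by
  refine Nat.sSup_mem ?_ (bddAbove_ncard_isIndep G)
  exact ⟨0, ∅, Set.pairwise_empty _, Set.ncard_empty V⟩

lemma ncard_edgeSet_le_matchNum {M : Subgraph G} (hM : M.IsMatching) :
    M.edgeSet.ncard ≤ matchNum G :=
  le_csSup (bddAbove_ncard_isMatching G) ⟨M, hM, rfl⟩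

lemma exists_isMaxMatching (G : SimpleGraph V) : ∃ M, IsMaxMatching G M := by
  refine Nat.sSup_mem ?_ (bddAbove_ncard_isMatching G)
  exact ⟨0, ⊥, fun _ hv => hv.elim, by simp⟩

lemma indepNum_add_matchNum_le (G : SimpleGraph V) : indepNum G + matchNum G ≤ Nat.card V := by
  obtain ⟨S, hS, hSc⟩ := exists_isMaxIndep G
  obtain ⟨M, hM, hMc⟩ := exists_isMaxMatching G
  calc indepNum G + matchNum G ≤ S.ncard + (M.verts \ S).ncard := by
        rw [hSc, ← hMc]; exact Nat.add_le_add_left (hM.ncard_edgeSet_le_ncard_verts_diff hS) _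
    _ ≤ S.ncard + Sᶜ.ncard := by
        gcongr; exacts [Set.toFinite _, fun x hx => hx.2]
    _ = Nat.card V := Set.ncard_add_ncard_compl S

lemma koenigEgervary_of_isIndep_of_isMatching {A : Set V} {M : Subgraph G} (hA : IsIndep G A)
    (hM : M.IsMatching) (hAM : Aᶜ ⊆ M.verts) (hnadj : ∀ u ∉ A, ∀ v ∉ A, ¬ M.Adj u v) :
    KoenigEgervary G := by
  refine le_antisymm ?_ (indepNum_add_matchNum_le G)
  calc Nat.card V = A.ncard + Aᶜ.ncard := (Set.ncard_add_ncard_compl A).symm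
    _ ≤ indepNum G + matchNum G :=
        Nat.add_le_add hA.ncard_le_indepNum
          ((hM.ncard_le_ncard_edgeSet hAM hnadj).trans (ncard_edgeSet_le_matchNum hM))

namespace KoenigEgervary

variable (hG : KoenigEgervary G) {M : Subgraph G} (hM : IsMaxMatching G M)
include hG hM

lemma ncard_compl_eq_ncard_edgeSet {T : Set V} (hT : IsMaxIndep G T) :
    Tᶜ.ncard = M.edgeSet.ncard := by
  have := Set.ncard_add_ncard_compl T
  rw [hT.2, hG] at this
  rw [hM.2]
  omega

lemma compl_subset_verts {T : Set V} (hT : IsMaxIndep G T) : Tᶜ ⊆ M.verts := by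
  have hsub : M.verts \ T ⊆ Tᶜ := fun _ hx => hx.2
  have hle : Tᶜ.ncard ≤ (M.verts \ T).ncard :=
    (hG.ncard_compl_eq_ncard_edgeSet hM hT).trans_le (hM.1.ncard_edgeSet_le_ncard_verts_diff hT.1)
  rw [← Set.eq_of_subset_of_ncard_le hsub hle (Set.toFinite _)]
  exact Set.sdiff_subset

lemma mem_of_adj_of_notMem {T : Set V} (hT : IsMaxIndep G T) {v w : V} (hvw : M.Adj v w)
    (hv : v ∉ T) : w ∈ T := by
  by_contra hw
  have hlt := hM.1.ncard_edgeSet_lt_ncard_verts_diff hT.1 hvw hv hw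
  have hle : (M.verts \ T).ncard ≤ Tᶜ.ncard := Set.ncard_le_ncard (fun _ hx => hx.2)
  rw [hG.ncard_compl_eq_ncard_edgeSet hM hT] at hle
  omega

lemma exists_adj_mem {T : Set V} (hT : IsMaxIndep G T) {v : V} (hv : v ∉ T) :
    ∃ w, M.Adj v w ∧ w ∈ T := by
  obtain ⟨w, hvw, -⟩ := hM.1 (hG.compl_subset_verts hM hT hv)
  exact ⟨w, hvw, hG.mem_of_adj_of_notMem hM hT hvw hv⟩

lemma mem_core_of_adj_of_mem_nbhd {x y : V} (hxy : M.Adj x y) (hy : y ∈ nbhd G (core G)) :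
    x ∈ core G := by
  obtain ⟨c, hc, hyc⟩ := hy
  refine mem_core_iff.2 fun T hT => hG.mem_of_adj_of_notMem hM hT hxy.symm fun hyT => ?_
  exact hT.1 hyT (mem_core_iff.1 hc T hT) hyc.ne hyc

lemma exists_adj_notMem_closedNbhd_core {x : V} (hx : x ∉ core G ∪ nbhd G (core G)) :
    ∃ y ∉ core G ∪ nbhd G (core G), M.Adj x y := by
  rw [Set.mem_union, not_or] at hx
  obtain ⟨T, hT, hxT⟩ : ∃ T, IsMaxIndep G T ∧ x ∉ T := by
    simpa [mem_core_iff] using hx.1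
  obtain ⟨y, hxy, -⟩ := hG.exists_adj_mem hM hT hxT
  refine ⟨y, ?_, hxy⟩
  rintro (hy | hy)
  · exact hx.2 ⟨y, hy, M.adj_sub hxy⟩
  · exact hx.1 (hG.mem_core_of_adj_of_mem_nbhd hM hxy hy)

end KoenigEgervary

end Finite

/-- If `G` is a finite König–Egerváry graph, then `G - N[core(G)]` has a
perfect matching and is itself a König–Egerváry graph. -/
theorem remove_closed_nbhd_core [Finite V] (G : SimpleGraph V)
    (hG : KoenigEgervary G) :
    (∃ M : Subgraph (G.induce (core G ∪ nbhd G (core G))ᶜ), M.IsPerfectMatching) ∧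
      KoenigEgervary (G.induce (core G ∪ nbhd G (core G))ᶜ) := by
  obtain ⟨S, hS⟩ := exists_isMaxIndep G
  obtain ⟨M, hM⟩ := exists_isMaxMatching G
  have hperf := hM.1.isPerfectMatching_comap_induce fun _ hx =>
    hG.exists_adj_notMem_closedNbhd_core hM hx
  refine ⟨⟨_, hperf⟩, koenigEgervary_of_isIndep_of_isMatching (A := {x | ↑x ∈ S}) ?_ hperf.1
    (fun v _ => hperf.2 v) ?_⟩
  · exact fun u hu v hv huv => hS.1 hu hv (Subtype.coe_injective.ne huv)
  · exact fun u hu v hv huv => hv (hG.mem_of_adj_of_notMem hM hS huv.2 hu)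

end KEPaper
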